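/- arXiv:2208.11530 — 5 statements merged into one kernel-verified Lean document; each statement's English description precedes it below -/
import Mathlib

section
/- Let σ > 0 and γ ∈ (0,1]. The Laplace confidence bound β(n) = σ·√( (2/n)·(1 + 1/n)·ln(√(n+1)/γ) ) is antitone in n on the positive integers: for all integers n ≥ 1, β(n+1) ≤ β(n). -/
/-!
Write `ℓ(x) = log(√(x+1)/γ) = log(x+1)/2 + log(1/γ)`, so that `β(n)² = 2σ²(n+1)ℓ(n)/n²`.
Passing from `n` to `n+1` multiplies the prefactor `(n+1)/n²` by `(n+2)n²/(n+1)³`, while `ℓ` grows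
by at most `1/(2(n+1))` (from `log t ≤ t - 1`). Since `ℓ(n) ≥ n/(2(n+1))` (from `1 - 1/t ≤ log t`
and `γ ≤ 1`), the relative growth of `ℓ` is at most `1/n`, which the prefactor more than absorbs.
-/

open Real

lemma log_sqrt_div {γ y : ℝ} (hγ : γ ≠ 0) (hy : 0 < y) :
    log (√y / γ) = log y / 2 - log γ := by
  rw [log_div (by positivity) hγ, log_sqrt hy.le]

lemma div_two_mul_succ_le_log_sqrt_div {x γ : ℝ} (hx : 0 ≤ x) (hγ : γ ∈ Set.Ioc (0 : ℝ) 1) :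
    x / (2 * (x + 1)) ≤ log (√(x + 1) / γ) := by
  have hγ_log : log γ ≤ 0 := log_nonpos hγ.1.le hγ.2
  have hlog : 1 - (x + 1)⁻¹ ≤ log (x + 1) := one_sub_inv_le_log_of_pos (by positivity)
  have hfrac : x / (2 * (x + 1)) = (1 - (x + 1)⁻¹) / 2 := by field_simp; ring
  rw [log_sqrt_div hγ.1.ne' (by positivity), hfrac]
  linarith

lemma log_sqrt_div_succ_le {x γ : ℝ} (hx : 0 ≤ x) (hγ : γ ≠ 0) :
    log (√(x + 2) / γ) ≤ log (√(x + 1) / γ) + 1 / (2 * (x + 1)) := by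
  have hratio : log ((x + 2) / (x + 1)) ≤ (x + 2) / (x + 1) - 1 :=
    log_le_sub_one_of_pos (by positivity)
  rw [log_div (by positivity) (by positivity)] at hratio
  have hfrac : (x + 2) / (x + 1) - 1 = 2 * (1 / (2 * (x + 1))) := by field_simp; ring
  rw [hfrac] at hratio
  rw [log_sqrt_div hγ (by positivity), log_sqrt_div hγ (by positivity)]
  linarith

lemma prefactor_mul_le_of_le_add {x a b : ℝ} (hx : 0 < x) (ha : x / (2 * (x + 1)) ≤ a)
    (hb : b ≤ a + 1 / (2 * (x + 1))) :
    2 / (x + 1) * (1 + 1 / (x + 1)) * b ≤ 2 / x * (1 + 1 / x) * a := by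
  calc 2 / (x + 1) * (1 + 1 / (x + 1)) * b
      ≤ 2 / (x + 1) * (1 + 1 / (x + 1)) * (a + 1 / (2 * (x + 1))) := by gcongr
    _ = (x + 2) * (2 * (x + 1) * a + 1) / (x + 1) ^ 3 := by field_simp; ring
    _ ≤ 2 * (x + 1) * a / x ^ 2 := by
      rw [div_le_iff₀ (by positivity)] at ha
      rw [div_le_div_iff₀ (by positivity) (by positivity)]
      -- `(x + 1)³ - x²(x + 2) = x² + 3x + 1`
      nlinarith [mul_le_mul_of_nonneg_left ha (by positivity : (0 : ℝ) ≤ x ^ 2 + 3 * x + 1)]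
    _ = 2 / x * (1 + 1 / x) * a := by field_simp

/-- **The Laplace confidence bound is antitone.**
For `σ > 0` and `γ ∈ (0,1]`, the bound `β(n) = σ·√((2/n)·(1+1/n)·ln(√(n+1)/γ))`
satisfies `β(n+1) ≤ β(n)` for every integer `n ≥ 1`. -/
theorem laplace_bound_antitone
    (σ γ : ℝ) (hσ : 0 < σ) (hγ : γ ∈ Set.Ioc (0 : ℝ) 1)
    (β : ℕ → ℝ)
    (hβ : ∀ n : ℕ, β n =
      σ * Real.sqrt (2 / (n : ℝ) * (1 + 1 / (n : ℝ)) *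
        Real.log (Real.sqrt ((n : ℝ) + 1) / γ))) :
    ∀ n : ℕ, 1 ≤ n → β (n + 1) ≤ β n := by
  intro n hn
  have hx : (0 : ℝ) < n := by exact_mod_cast hn
  rw [hβ, hβ]
  push_cast
  rw [add_assoc, one_add_one_eq_two]
  gcongr σ * √?_
  exact prefactor_mul_le_of_le_add hx (div_two_mul_succ_le_log_sqrt_div hx.le hγ)
    (log_sqrt_div_succ_le hx.le hγ.1.ne')
end

section
/- (Class membership rule.) Let β be a nonnegative antitone function on the positive integers. Consider A agents with means μ_1,…,μ_A ∈ ℝ, and fix an agent a ∈ {1,…,A}. For each agent l, let x̄_l ∈ ℝ be an estimate with sample count n_l ≥ 1 such that |x̄_l − μ_l| ≤ β(n_l) (event E), and suppose n_a ≥ n_l for all l. Suppose furthermore that for every l with μ_l ≠ μ_a one has β(n_l) < Δ_{a,l}/4, where Δ_{a,l} = |μ_a − μ_l| (event G). Then for every agent l ∈ {1,…,A}: the optimistic distance |x̄_a − x̄_l| − β(n_a) − β(n_l) > 0 if and only if μ_l ≠ μ_a (i.e., if and only if l does not belong to the similarity class C_a = {l : μ_l = μ_a}). -/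
/-- **Class membership rule (Lemma 2 of the paper).**
Under the event `E` (all estimates within their confidence bounds) and the event `G`
(enough samples to separate agents of different classes, i.e. `β(n_l) < Δ_{a,l}/4`
whenever `μ l ≠ μ a`), and assuming agent `a` has the largest sample count, the
optimistic distance `|x̄ a − x̄ l| − β(n a) − β(n l)` is positive if and only if
`l` is not in the similarity class of `a` (i.e. `μ l ≠ μ a`). -/
theorem class_membership_rule
    (A : ℕ) (β : ℕ → ℝ)
    (hβ0 : ∀ n : ℕ, 1 ≤ n → 0 ≤ β n)
    (hβanti : ∀ m n : ℕ, 1 ≤ n → n ≤ m → β m ≤ β n)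
    (μ : Fin A → ℝ) (a : Fin A)
    (xbar : Fin A → ℝ) (n : Fin A → ℕ)
    (hn : ∀ l, 1 ≤ n l)
    (hE : ∀ l, |xbar l - μ l| ≤ β (n l))
    (hna : ∀ l, n l ≤ n a)
    (hG : ∀ l, μ l ≠ μ a → β (n l) < |μ a - μ l| / 4) :
    ∀ l : Fin A,
      (0 < |xbar a - xbar l| - β (n a) - β (n l) ↔ μ l ≠ μ a) := by
  intro l
  have hEa := hE a
  have hEl := hE l
  have hba : 0 ≤ β (n a) := hβ0 _ (hn a)
  have hbl : 0 ≤ β (n l) := hβ0 _ (hn l)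
  constructor
  · intro hpos
    intro heq
    have h1 : |xbar a - xbar l| ≤ β (n a) + β (n l) := by
      have : xbar a - xbar l = (xbar a - μ a) + (μ l - xbar l) := by rw [heq]; ring
      rw [this]
      calc |(xbar a - μ a) + (μ l - xbar l)| ≤ |xbar a - μ a| + |μ l - xbar l| := abs_add_le _ _
        _ ≤ β (n a) + β (n l) := by
            rw [abs_sub_comm (μ l)]; exact add_le_add hEa hEl
    linarith
  · intro hne
    have hG' := hG l hne
    have hanti : β (n a) ≤ β (n l) := hβanti _ _ (hn l) (hna l)
    have h2 : |μ a - μ l| ≤ |xbar a - xbar l| + β (n a) + β (n l) := by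
      have : μ a - μ l = (μ a - xbar a) + (xbar a - xbar l) + (xbar l - μ l) := by ring
      rw [this]
      calc |(μ a - xbar a) + (xbar a - xbar l) + (xbar l - μ l)|
          ≤ |(μ a - xbar a) + (xbar a - xbar l)| + |xbar l - μ l| := abs_add_le _ _
        _ ≤ |μ a - xbar a| + |xbar a - xbar l| + |xbar l - μ l| := by
            have := abs_add_le (μ a - xbar a) (xbar a - xbar l); linarith
        _ ≤ β (n a) + |xbar a - xbar l| + β (n l) := by
            rw [abs_sub_comm (μ a)]; exact add_le_add (add_le_add hEa le_rfl) hEl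
        _ = |xbar a - xbar l| + β (n a) + β (n l) := by ring
    linarith
end

section
/- (Deterministic core of the class estimation theorem, Round-Robin case.) Let β be a nonnegative antitone function on the positive integers. Consider A agents with means μ_1,…,μ_A ∈ ℝ and, for each l, a function x̄_l : {1,2,…} → ℝ (the local average of agent l after n samples) satisfying |x̄_l(n) − μ_l| ≤ β(n) for all n ≥ 1. Fix an agent a such that there exists l with μ_l ≠ μ_a, and let Δ_a = min{ |μ_a − μ_l| : μ_l ≠ μ_a } > 0 and let n* be the smallest positive integer with β(n*) < Δ_a/4 (assumed to exist). Let n_l : ℕ → ℕ be memory counts satisfying t − A + 1 ≤ n_l(t) ≤ t for all t ≥ A and all l, with n_a(t) = t. Then for every time t > n* + A − 1, the optimistic similarity class C_a^t = { l : |x̄_a(t) − x̄_l(n_l(t))| − β(t) − β(n_l(t)) ≤ 0 } equals the true similarity class C_a = { l : μ_l = μ_a }. -/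
/-!
Past time `n* + A - 1` every memory count is at least `n*`, so both confidence radii in the
optimistic test are below `Δ_a / 4`. Two estimates of equal means always pass the test by the
triangle inequality; if estimates of different means passed it, the means would be within
`2 (β(t) + β(n_l(t))) < Δ_a` of each other, contradicting the minimality of `Δ_a`.
-/

theorem abs_sub_sub_sub_nonpos_of_abs_sub_le {x y μ b c : ℝ} (hx : |x - μ| ≤ b)
    (hy : |y - μ| ≤ c) : |x - y| - b - c ≤ 0 := by
  have := abs_sub_le x μ y
  rw [abs_sub_comm μ y] at this
  linarith

theorem abs_sub_le_two_mul_of_abs_sub_sub_sub_nonpos {x y μ ν b c : ℝ} (hx : |x - μ| ≤ b)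
    (hy : |y - ν| ≤ c) (h : |x - y| - b - c ≤ 0) : |μ - ν| ≤ 2 * (b + c) :=
  calc |μ - ν| ≤ |μ - x| + |x - ν| := abs_sub_le _ _ _
    _ ≤ |μ - x| + (|x - y| + |y - ν|) := by gcongr; exact abs_sub_le _ _ _
    _ ≤ 2 * (b + c) := by rw [abs_sub_comm]; linarith

theorem abs_sub_sub_sub_nonpos_iff_eq {x y μ ν b c Δ : ℝ} (hx : |x - μ| ≤ b)
    (hy : |y - ν| ≤ c) (hb : b < Δ / 4) (hc : c < Δ / 4) (hsep : μ ≠ ν → Δ ≤ |μ - ν|) :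
    |x - y| - b - c ≤ 0 ↔ ν = μ := by
  refine ⟨fun h => ?_, fun h => abs_sub_sub_sub_nonpos_of_abs_sub_le hx (h ▸ hy)⟩
  by_contra hne
  have := abs_sub_le_two_mul_of_abs_sub_sub_sub_nonpos hx hy h
  linarith [hsep (Ne.symm hne)]

theorem class_estimation_deterministic_core_general
    (A : ℕ) (β : ℕ → ℝ)
    (hβanti : ∀ m n : ℕ, 1 ≤ n → n ≤ m → β m ≤ β n)
    (μ : Fin A → ℝ) (xbar : Fin A → ℕ → ℝ)
    (hE : ∀ l : Fin A, ∀ n : ℕ, 1 ≤ n → |xbar l n - μ l| ≤ β n)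
    (a : Fin A)
    (Δa : ℝ)
    (hΔa : IsLeast {d : ℝ | ∃ l : Fin A, μ l ≠ μ a ∧ d = |μ a - μ l|} Δa)
    (nstar : ℕ) (hnstar1 : 1 ≤ nstar) (hnstar2 : β nstar < Δa / 4)
    (nmem : Fin A → ℕ → ℕ)
    (hmem : ∀ l : Fin A, ∀ t : ℕ, A ≤ t →
      t - A + 1 ≤ nmem l t ∧ nmem l t ≤ t) :
    ∀ t : ℕ, nstar + A - 1 < t →
      {l : Fin A |
          |xbar a t - xbar l (nmem l t)| - β t - β (nmem l t) ≤ 0} =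
        {l : Fin A | μ l = μ a} := by
  intro t ht
  have hA : 0 < A := Fin.pos a
  have hβ : ∀ n, nstar ≤ n → β n < Δa / 4 := fun n hn =>
    (hβanti n nstar hnstar1 hn).trans_lt hnstar2
  ext l
  obtain ⟨hlow, -⟩ := hmem l t (by omega)
  exact abs_sub_sub_sub_nonpos_iff_eq (hE a t (by omega)) (hE l (nmem l t) (by omega))
    (hβ t (by omega)) (hβ _ (by omega)) fun hne => hΔa.2 ⟨l, Ne.symm hne, rfl⟩

/-- **Deterministic core of the class estimation theorem (Round-Robin case,
Theorem 1 of the paper).**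
Under the event `E` (every local average of every agent after `n ≥ 1` samples lies
within the nonnegative antitone confidence bound `β n` of its true mean), for
Round-Robin memory counts (`t − A + 1 ≤ n_l(t) ≤ t`, with `n_a(t) = t`), and for every
time `t > n* + A − 1` where `n*` is the smallest positive integer with `β(n*) < Δ_a/4`
and `Δ_a = min{|μ a − μ l| : μ l ≠ μ a} > 0`, the optimistic similarity class of agent
`a` equals its true similarity class. -/
theorem class_estimation_deterministic_core
    (A : ℕ) (β : ℕ → ℝ)
    (hβ0 : ∀ n : ℕ, 1 ≤ n → 0 ≤ β n)
    (hβanti : ∀ m n : ℕ, 1 ≤ n → n ≤ m → β m ≤ β n)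
    (μ : Fin A → ℝ) (xbar : Fin A → ℕ → ℝ)
    (hE : ∀ l : Fin A, ∀ n : ℕ, 1 ≤ n → |xbar l n - μ l| ≤ β n)
    (a : Fin A) (hex : ∃ l : Fin A, μ l ≠ μ a)
    (Δa : ℝ)
    (hΔa : IsLeast {d : ℝ | ∃ l : Fin A, μ l ≠ μ a ∧ d = |μ a - μ l|} Δa)
    (hΔapos : 0 < Δa)
    (nstar : ℕ) (hnstar1 : 1 ≤ nstar) (hnstar2 : β nstar < Δa / 4)
    (hnstar3 : ∀ m : ℕ, 1 ≤ m → β m < Δa / 4 → nstar ≤ m)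
    (nmem : Fin A → ℕ → ℕ)
    (hmem : ∀ l : Fin A, ∀ t : ℕ, A ≤ t →
      t - A + 1 ≤ nmem l t ∧ nmem l t ≤ t)
    (hself : ∀ t : ℕ, nmem a t = t) :
    ∀ t : ℕ, nstar + A - 1 < t →
      {l : Fin A |
          |xbar a t - xbar l (nmem l t)| - β t - β (nmem l t) ≤ 0} =
        {l : Fin A | μ l = μ a} :=
  class_estimation_deterministic_core_general A β hβanti μ xbar hE a Δa hΔa nstar hnstar1 hnstar2
    nmem hmem
end

section
/- (η-class membership rule.) Let η > 0 and let β be a nonnegative antitone function on the positive integers. Consider A agents with means μ_1,…,μ_A ∈ ℝ, and fix an agent a ∈ {1,…,A}. For each agent l, let x̄_l ∈ ℝ be an estimate with sample count n_l ≥ 1 such that |x̄_l − μ_l| ≤ β(n_l) (event E), and suppose n_a ≥ n_l for all l. Suppose furthermore that for every l with Δ_{a,l} = |μ_a − μ_l| > η one has β(n_l) < (Δ_{a,l} − η)/4 (event G_η). Then for every agent l ∈ {1,…,A}: the optimistic distance |x̄_a − x̄_l| − β(n_a) − β(n_l) > η if and only if Δ_{a,l} > η (i.e., if and only if l does not belong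 to the η-similarity class C_{η,a} = {l : |μ_a − μ_l| ≤ η}). -/
/-- **η-class membership rule (Lemma 5 of the paper).**
Under the event `E` (all estimates within their confidence bounds) and the event `G_η`
(enough samples to separate agents outside the η-similarity class, i.e.
`β(n_l) < (Δ_{a,l} − η)/4` whenever `Δ_{a,l} = |μ a − μ l| > η`), and assuming agent `a`
has the largest sample count, the optimistic distance
`|x̄ a − x̄ l| − β(n a) − β(n l)` exceeds `η` if and only if `l` is not in the
η-similarity class of `a` (i.e. `|μ a − μ l| > η`). -/
theorem eta_class_membership_rule
    (η : ℝ) (hη : 0 < η)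
    (A : ℕ) (β : ℕ → ℝ)
    (hβ0 : ∀ n : ℕ, 1 ≤ n → 0 ≤ β n)
    (hβanti : ∀ m n : ℕ, 1 ≤ n → n ≤ m → β m ≤ β n)
    (μ : Fin A → ℝ) (a : Fin A)
    (xbar : Fin A → ℝ) (n : Fin A → ℕ)
    (hn : ∀ l, 1 ≤ n l)
    (hE : ∀ l, |xbar l - μ l| ≤ β (n l))
    (hna : ∀ l, n l ≤ n a)
    (hG : ∀ l, η < |μ a - μ l| → β (n l) < (|μ a - μ l| - η) / 4) :
    ∀ l : Fin A,
      (η < |xbar a - xbar l| - β (n a) - β (n l) ↔ η < |μ a - μ l|) := by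
  intro l
  have h1 := abs_le.mp (hE a)
  have h2 := abs_le.mp (hE l)
  have hb := hβanti (n a) (n l) (hn l) (hna l)
  have hb0 := hβ0 (n l) (hn l)
  constructor
  · intro h
    by_contra h'
    push_neg at h'
    rcases abs_cases (xbar a - xbar l) with ⟨he, _⟩ | ⟨he, _⟩ <;>
      rcases abs_cases (μ a - μ l) with ⟨hm, _⟩ | ⟨hm, _⟩ <;> linarith
  · intro h
    have hg := hG l h
    rcases abs_cases (xbar a - xbar l) with ⟨he, _⟩ | ⟨he, _⟩ <;>
      rcases abs_cases (μ a - μ l) with ⟨hm, hm'⟩ | ⟨hm, hm'⟩ <;> linarith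
end

section
/- (Deterministic core of the η-class estimation theorem, Round-Robin case.) Let η > 0 and let β be a nonnegative antitone function on the positive integers. Consider A agents with means μ_1,…,μ_A ∈ ℝ and, for each l, a function x̄_l : {1,2,…} → ℝ satisfying |x̄_l(n) − μ_l| ≤ β(n) for all n ≥ 1. Fix an agent a such that there exists l with |μ_a − μ_l| > η, let Δ_{η,a} = min{ |μ_a − μ_l| : |μ_a − μ_l| > η } and let n^η be the smallest positive integer with β(n^η) < (Δ_{η,a} − η)/4 (assumed to exist). Let n_l : ℕ → ℕ be memory counts satisfying t − A + 1 ≤ n_l(t) ≤ t for all t ≥ A and all l, with n_a(t) = t. Then for every time t > n^η + A − 1, the η-optimistic similarity class C_{η,a}^t = { l : |x̄_a(t) − x̄_l(n_l(t))| − β(t) − β(n_l(t)) ≤ η } equals the true η-similarity class C_{η,a} = { l : |μ_a − μ_l| ≤ η }. -/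
/-- **Deterministic core of the η-class estimation theorem (Round-Robin case,
Theorem 3 of the paper).**
Under the event `E` (every local average of every agent after `n ≥ 1` samples lies
within the nonnegative antitone confidence bound `β n` of its true mean), for
Round-Robin memory counts (`t − A + 1 ≤ n_l(t) ≤ t`, with `n_a(t) = t`), and for every
time `t > n^η + A − 1` where `n^η` is the smallest positive integer with
`β(n^η) < (Δ_{η,a} − η)/4` and `Δ_{η,a} = min{|μ a − μ l| : |μ a − μ l| > η}`, the
η-optimistic similarity class of agent `a` equals its true η-similarity class. -/
theorem eta_class_estimation_deterministic_core
    (η : ℝ) (hη : 0 < η)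
    (A : ℕ) (β : ℕ → ℝ)
    (hβ0 : ∀ n : ℕ, 1 ≤ n → 0 ≤ β n)
    (hβanti : ∀ m n : ℕ, 1 ≤ n → n ≤ m → β m ≤ β n)
    (μ : Fin A → ℝ) (xbar : Fin A → ℕ → ℝ)
    (hE : ∀ l : Fin A, ∀ n : ℕ, 1 ≤ n → |xbar l n - μ l| ≤ β n)
    (a : Fin A) (hex : ∃ l : Fin A, η < |μ a - μ l|)
    (Δηa : ℝ)
    (hΔηa : IsLeast {d : ℝ | ∃ l : Fin A, η < |μ a - μ l| ∧ d = |μ a - μ l|} Δηa)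
    (neta : ℕ) (hneta1 : 1 ≤ neta) (hneta2 : β neta < (Δηa - η) / 4)
    (hneta3 : ∀ m : ℕ, 1 ≤ m → β m < (Δηa - η) / 4 → neta ≤ m)
    (nmem : Fin A → ℕ → ℕ)
    (hmem : ∀ l : Fin A, ∀ t : ℕ, A ≤ t →
      t - A + 1 ≤ nmem l t ∧ nmem l t ≤ t)
    (hself : ∀ t : ℕ, nmem a t = t) :
    ∀ t : ℕ, neta + A - 1 < t →
      {l : Fin A |
          |xbar a t - xbar l (nmem l t)| - β t - β (nmem l t) ≤ η} =
        {l : Fin A | |μ a - μ l| ≤ η} := by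
  intro t ht
  have hA : 1 ≤ A := a.pos
  have htA : A ≤ t := by omega
  have ht1 : 1 ≤ t := by omega
  ext l
  simp only [Set.mem_setOf_eq]
  have hnl := hmem l t htA
  have hnl1 : 1 ≤ nmem l t := by omega
  have hntl : neta ≤ nmem l t := by omega
  have hβt : β t ≤ β neta := hβanti t neta hneta1 (by omega)
  have hβn : β (nmem l t) ≤ β neta := hβanti _ neta hneta1 hntl
  have hEa := hE a t ht1
  have hEl := hE l (nmem l t) hnl1
  have hc1 := abs_sub_comm (xbar a t) (μ a)
  have hc2 := abs_sub_comm (xbar l (nmem l t)) (μ l)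
  constructor
  · intro h
    by_contra hgt
    push_neg at hgt
    have hΔle : Δηa ≤ |μ a - μ l| := hΔηa.2 ⟨l, hgt, rfl⟩
    have k1 := abs_sub_le (μ a) (xbar a t) (μ l)
    have k2 := abs_sub_le (xbar a t) (xbar l (nmem l t)) (μ l)
    linarith
  · intro h
    have k1 := abs_sub_le (xbar a t) (μ a) (xbar l (nmem l t))
    have k2 := abs_sub_le (μ a) (μ l) (xbar l (nmem l t))
    have hc3 := abs_sub_comm (μ l) (xbar l (nmem l t))
    linarith
end
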